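/- Let A be a process executing the quasi rendezvous protocol. Whatever the execution, the system reaches a configuration in which A's program counter is no longer within the repeat loop; in particular no process stays in the repeat loop forever. -/

import Mathlib

/-!
An operational model of the quasi rendezvous protocol of Johnen, Lavallée, Lavault.

Each process `A` owns, for each neighbour `B_i`, a register `Write_{AB_i}` and two
one-bit registers `Control_{AB_i}` and `CheckControl_{AB_i}`; communication is under
read/write atomicity.
-/

structure Network where
  Proc : Type
  deg : Proc → ℕ
  deg_pos : ∀ p, 0 < deg p
  nbr : (p : Proc) → Fin (deg p) → Proc
  nbr_ne : ∀ p i, nbr p i ≠ p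
  nbr_inj : ∀ p, Function.Injective (nbr p)
  nbr_symm : ∀ p i, ∃ j, nbr (nbr p i) j = p

namespace QR

open Classical

/-- Program counter of a process with `n` neighbours running the quasi rendezvous
protocol.  `wr i k` : writing phase, neighbour `i`, sub-action `k`
(`k = 0`: `write(Write_{AB_i}, get_i)`, `k = 1`: `c_i ← read(Control_{AB_i})`,
`k = 2`: `write(Control_{AB_i}, (c_i+1) mod 2)`);
`lp i k` : repeat loop, neighbour `i`, sub-action `k`
(`k = 0`: `b_i ← read(Control_{B_iA})`, `k = 1`: `d_i ← read(CheckControl_{AB_i})`,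
then if `b_i ≠ d_i` continue with `k = 2`: `r_i ← read(Write_{B_iA})` and
`k = 3`: `write(CheckControl_{AB_i}, b_i)`, else jump to `k = 4`;
`k = 4`: `c_i ← read(Control_{AB_i})`, `k = 5`: `l_i ← read(CheckControl_{B_iA})`,
followed, after the last neighbour, by the (local) exit test `∀ i, c_i = l_i`). -/
inductive PC (n : ℕ) : Type
  | wr : Fin n → Fin 3 → PC n
  | lp : Fin n → Fin 6 → PC n

/-- An atomic action (read/write atomicity); `A B` names the owner and the direction
of the register, e.g. `readC A B` is a read of `Control_{AB}` and `writeCC A B b`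
writes the bit `b` into `CheckControl_{AB}`. -/
inductive Act (Proc Val : Type) : Type
  | readW : Proc → Proc → Act Proc Val
  | writeW : Proc → Proc → Val → Act Proc Val
  | readC : Proc → Proc → Act Proc Val
  | writeC : Proc → Proc → Bool → Act Proc Val
  | readCC : Proc → Proc → Act Proc Val
  | writeCC : Proc → Proc → Bool → Act Proc Val

/-- A configuration: register contents and local states (pc and local variables
`r_i`, `b_i`, `d_i`, `c_i`, `l_i`). -/
structure Config (Net : Network) (Val : Type) : Type where
  regW : Net.Proc → Net.Proc → Val
  regC : Net.Proc → Net.Proc → Bool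
  regCC : Net.Proc → Net.Proc → Bool
  pc : (p : Net.Proc) → PC (Net.deg p)
  rv : (p : Net.Proc) → Fin (Net.deg p) → Val
  bv : (p : Net.Proc) → Fin (Net.deg p) → Bool
  dv : (p : Net.Proc) → Fin (Net.deg p) → Bool
  cv : (p : Net.Proc) → Fin (Net.deg p) → Bool
  lv : (p : Net.Proc) → Fin (Net.deg p) → Bool

def finSucc? {n : ℕ} (i : Fin n) : Option (Fin n) :=
  if h : i.1 + 1 < n then some ⟨i.1 + 1, h⟩ else none

noncomputable def upd2 {Proc : Type} {β : Type} (f : Proc → Proc → β) (a b : Proc) (v : β) :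
    Proc → Proc → β :=
  fun x y => if x = a ∧ y = b then v else f x y

/-- One atomic step of process `p`, labelled by the action performed.  The value
written by `write(Write_{AB_i}, get_i)` is arbitrary (`get_i` is an arbitrary helper
function returning the next message). -/
inductive Step (Net : Network) (Val : Type) :
    Config Net Val → Net.Proc → Act Net.Proc Val → Config Net Val → Prop
  | writeW (c : Config Net Val) (p : Net.Proc) (i : Fin (Net.deg p)) (v : Val)
      (h : c.pc p = .wr i 0) :
      Step Net Val c p (.writeW p (Net.nbr p i) v)
        { c with
          regW := upd2 c.regW p (Net.nbr p i) v
          pc := Function.update c.pc p (PC.wr i 1) }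
  | readOwnC (c : Config Net Val) (p : Net.Proc) (i : Fin (Net.deg p))
      (h : c.pc p = .wr i 1) :
      Step Net Val c p (.readC p (Net.nbr p i))
        { c with
          cv := Function.update c.cv p (Function.update (c.cv p) i (c.regC p (Net.nbr p i)))
          pc := Function.update c.pc p (PC.wr i 2) }
  | writeOwnC (c : Config Net Val) (p : Net.Proc) (i : Fin (Net.deg p))
      (h : c.pc p = .wr i 2) :
      Step Net Val c p (.writeC p (Net.nbr p i) (!(c.cv p i)))
        { c with
          regC := upd2 c.regC p (Net.nbr p i) (!(c.cv p i))
          pc := Function.update c.pc p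
            (match finSucc? i with
             | some j => PC.wr j 0
             | none => PC.lp ⟨0, Net.deg_pos p⟩ 0) }
  | readNbrC (c : Config Net Val) (p : Net.Proc) (i : Fin (Net.deg p))
      (h : c.pc p = .lp i 0) :
      Step Net Val c p (.readC (Net.nbr p i) p)
        { c with
          bv := Function.update c.bv p (Function.update (c.bv p) i (c.regC (Net.nbr p i) p))
          pc := Function.update c.pc p (PC.lp i 1) }
  | readOwnCC (c : Config Net Val) (p : Net.Proc) (i : Fin (Net.deg p))
      (h : c.pc p = .lp i 1) :
      Step Net Val c p (.readCC p (Net.nbr p i))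
        { c with
          dv := Function.update c.dv p
            (Function.update (c.dv p) i (c.regCC p (Net.nbr p i)))
          pc := Function.update c.pc p
            (if c.bv p i ≠ c.regCC p (Net.nbr p i) then PC.lp i 2 else PC.lp i 4) }
  | readNbrW (c : Config Net Val) (p : Net.Proc) (i : Fin (Net.deg p))
      (h : c.pc p = .lp i 2) :
      Step Net Val c p (.readW (Net.nbr p i) p)
        { c with
          rv := Function.update c.rv p (Function.update (c.rv p) i (c.regW (Net.nbr p i) p))
          pc := Function.update c.pc p (PC.lp i 3) }
  | writeOwnCC (c : Config Net Val) (p : Net.Proc) (i : Fin (Net.deg p))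
      (h : c.pc p = .lp i 3) :
      Step Net Val c p (.writeCC p (Net.nbr p i) (c.bv p i))
        { c with
          regCC := upd2 c.regCC p (Net.nbr p i) (c.bv p i)
          pc := Function.update c.pc p (PC.lp i 4) }
  | readOwnC' (c : Config Net Val) (p : Net.Proc) (i : Fin (Net.deg p))
      (h : c.pc p = .lp i 4) :
      Step Net Val c p (.readC p (Net.nbr p i))
        { c with
          cv := Function.update c.cv p (Function.update (c.cv p) i (c.regC p (Net.nbr p i)))
          pc := Function.update c.pc p (PC.lp i 5) }
  | readNbrCC (c : Config Net Val) (p : Net.Proc) (i : Fin (Net.deg p))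
      (h : c.pc p = .lp i 5) :
      Step Net Val c p (.readCC (Net.nbr p i) p)
        { c with
          lv := Function.update c.lv p (Function.update (c.lv p) i (c.regCC (Net.nbr p i) p))
          pc := Function.update c.pc p
            (match finSucc? i with
             | some j => PC.lp j 0
             | none =>
               if ∀ j, c.cv p j = Function.update (c.lv p) i (c.regCC (Net.nbr p i) p) j
               then PC.wr ⟨0, Net.deg_pos p⟩ 0
               else PC.lp ⟨0, Net.deg_pos p⟩ 0) }

/-- An execution: an infinite sequence of configurations, starting from an arbitrary
configuration, where at instant `t` the scheduled process performs one atomic action. -/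
structure Exec (Net : Network) (Val : Type) : Type where
  cfg : ℕ → Config Net Val
  sched : ℕ → Net.Proc
  act : ℕ → Act Net.Proc Val
  step : ∀ t, Step Net Val (cfg t) (sched t) (act t) (cfg (t + 1))

def Enabled {Net : Network} {Val : Type} (c : Config Net Val) (p : Net.Proc) : Prop :=
  ∃ a c', Step Net Val c p a c'

/-- Fair scheduler: any process that can continuously perform an action eventually
performs one. -/
def Exec.Fair {Net : Network} {Val : Type} (e : Exec Net Val) : Prop :=
  ∀ p t, (∀ u, t ≤ u → Enabled (e.cfg u) p) → ∃ u, t ≤ u ∧ e.sched u = p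

/-- The program counter of `p` is inside the repeat loop. -/
def InLoop {Net : Network} {Val : Type} (c : Config Net Val) (p : Net.Proc) : Prop :=
  ∃ i k, c.pc p = PC.lp i k

/-- In the quasi rendezvous protocol, `B` allows `A` to write iff
`CheckControl_{BA} = Control_{AB}`. -/
def Allows {Net : Network} {Val : Type} (c : Config Net Val) (B A : Net.Proc) : Prop :=
  c.regCC B A = c.regC A B

/-- `B` is a neighbour of `A`. -/
def Neighbour (Net : Network) (A B : Net.Proc) : Prop := ∃ i, Net.nbr A i = B

/-- At instant `t`, process `A` writes (some value) into its register `Write_{AB}`. -/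
def WritesW {Net : Network} {Val : Type} (e : Exec Net Val) (A B : Net.Proc) (t : ℕ) : Prop :=
  e.sched t = A ∧ ∃ v, e.act t = Act.writeW A B v

/-- At instant `t`, process `B` reads from the register `Write_{AB}` of its neighbour `A`. -/
def ReadsW {Net : Network} {Val : Type} (e : Exec Net Val) (A B : Net.Proc) (t : ℕ) : Prop :=
  e.sched t = B ∧ e.act t = Act.readW A B

/-- Process `P` has executed (at least) its first three atomic actions before
instant `t`. -/
def DidThree {Net : Network} {Val : Type} (e : Exec Net Val) (P : Net.Proc) (t : ℕ) : Prop :=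
  ∃ u1 u2 u3, u1 < u2 ∧ u2 < u3 ∧ u3 < t ∧
    e.sched u1 = P ∧ e.sched u2 = P ∧ e.sched u3 = P

/-- `A` performs a full (complete) writing of `Write_{AB}` at instants
`t1 < t2 < t3` (with no other action of `A` in between): the sequence
`write(Write_{AB}, get)`; `c ← read(Control_{AB})`;
`write(Control_{AB}, (c+1) mod 2)`. -/
def FullWriting {Net : Network} {Val : Type} (e : Exec Net Val) (A B : Net.Proc)
    (t1 t2 t3 : ℕ) : Prop :=
  t1 < t2 ∧ t2 < t3 ∧
  e.sched t1 = A ∧ e.sched t2 = A ∧ e.sched t3 = A ∧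
  (∃ v, e.act t1 = Act.writeW A B v) ∧
  e.act t2 = Act.readC A B ∧
  e.act t3 = Act.writeC A B (!(e.cfg t2).regC A B) ∧
  (∀ u, t1 < u → u < t3 → u ≠ t2 → e.sched u ≠ A)

end QR

/-!
Suppose `A` stays in its repeat loop from some time on. Then `A` never writes its `Control`
registers, so each `Control_{AB}` is eventually constant, say equal to `v_B`. Every process is
always enabled, so under a fair scheduler each neighbour `B` keeps running its program: it reads
`Control_{AB} = v_B` into `b`, then makes `CheckControl_{BA}` equal to `b`, and from then on
`CheckControl_{BA} = v_B` forever. Once all these registers have stabilised, the next complete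
pass of `A` through its loop reads `c_i = l_i` for every `i`, and `A` leaves the loop.
-/

namespace QR

open Classical Filter

variable {Net : Network} {Val : Type}

section Frame

variable {c c' : Config Net Val} {p q : Net.Proc} {a : Act Net.Proc Val}

theorem Step.pc_of_ne (h : Step Net Val c p a c') (hq : q ≠ p) : c'.pc q = c.pc q := by
  cases h <;> simp [Function.update_of_ne hq]

theorem Step.bv_of_ne (h : Step Net Val c p a c') (hq : q ≠ p) : c'.bv q = c.bv q := by
  cases h <;> simp [Function.update_of_ne hq]

theorem Step.cv_of_ne (h : Step Net Val c p a c') (hq : q ≠ p) : c'.cv q = c.cv q := by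
  cases h <;> simp [Function.update_of_ne hq]

theorem Step.lv_of_ne (h : Step Net Val c p a c') (hq : q ≠ p) : c'.lv q = c.lv q := by
  cases h <;> simp [Function.update_of_ne hq]

theorem Step.regCC_of_ne (h : Step Net Val c p a c') (hq : q ≠ p) : c'.regCC q = c.regCC q := by
  funext x; cases h <;> simp [upd2, hq]

theorem Step.regC_of_inLoop (h : Step Net Val c p a c') (hq : InLoop c q) :
    c'.regC q = c.regC q := by
  obtain ⟨_, _, hpc⟩ := hq
  funext x
  cases h with
  | writeOwnC _ h' =>
    simp only [upd2]
    rw [if_neg]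
    rintro ⟨rfl, -⟩
    simp [h'] at hpc
  | _ => rfl

end Frame

theorem Config.enabled (c : Config Net Val) (p : Net.Proc) : Enabled c p :=
  match hpc : c.pc p with
  | .wr i ⟨0, _⟩ => ⟨_, _, .writeW c p i (c.regW p p) hpc⟩
  | .wr i ⟨1, _⟩ => ⟨_, _, .readOwnC c p i hpc⟩
  | .wr i ⟨2, _⟩ => ⟨_, _, .writeOwnC c p i hpc⟩
  | .lp i ⟨0, _⟩ => ⟨_, _, .readNbrC c p i hpc⟩
  | .lp i ⟨1, _⟩ => ⟨_, _, .readOwnCC c p i hpc⟩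
  | .lp i ⟨2, _⟩ => ⟨_, _, .readNbrW c p i hpc⟩
  | .lp i ⟨3, _⟩ => ⟨_, _, .writeOwnCC c p i hpc⟩
  | .lp i ⟨4, _⟩ => ⟨_, _, .readOwnC' c p i hpc⟩
  | .lp i ⟨5, _⟩ => ⟨_, _, .readNbrCC c p i hpc⟩

def PC.rank {n : ℕ} : PC n → ℕ
  | .wr i k => 3 * i + k
  | .lp i k => 3 * n + 6 * i + k

theorem PC.rank_injective {n : ℕ} : Function.Injective (PC.rank (n := n)) := by
  rintro (⟨i, k⟩ | ⟨i, k⟩) (⟨i', k'⟩ | ⟨i', k'⟩) h <;> simp only [rank] at h <;>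
    first
    | (congr 1 <;> ext <;> omega)
    | omega

def PC.distTo {n : ℕ} (q g : PC n) : ℕ :=
  if q.rank ≤ g.rank then g.rank - q.rank else 9 * n + g.rank - q.rank

theorem PC.rank_lt {n : ℕ} (q : PC n) : q.rank < 9 * n := by
  cases q with
  | wr i k => have := i.2; have := k.2; simp only [rank]; omega
  | lp i k => have := i.2; have := k.2; simp only [rank]; omega

theorem PC.distTo_lt {n : ℕ} {q q' g : PC n} (hne : q.rank ≠ g.rank)
    (hadv : q.rank < q'.rank ∧ (q.rank < g.rank → q'.rank ≤ g.rank) ∨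
      q'.rank ≤ g.rank ∧ g.rank < q.rank) :
    q'.distTo g < q.distTo g := by
  have := q.rank_lt
  have := q'.rank_lt
  unfold distTo
  split_ifs <;> omega

/-- Only the branch `lp i 1 → lp i 4` and the restart `lp (n-1) 5 → lp 0 0` skip instructions,
and neither skips an `lp j k` with `k ∉ {2, 3}`. -/
theorem Step.distTo_lt {c c' : Config Net Val} {p : Net.Proc} {a : Act Net.Proc Val}
    (h : Step Net Val c p a c') {j : Fin (Net.deg p)} {k : Fin 6} (hk2 : k ≠ 2) (hk3 : k ≠ 3)
    (hne : c.pc p ≠ .lp j k) : (c'.pc p).distTo (.lp j k) < (c.pc p).distTo (.lp j k) := by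
  have hk2' : k.val ≠ 2 := fun hk => hk2 (Fin.ext hk)
  have hk3' : k.val ≠ 3 := fun hk => hk3 (Fin.ext hk)
  have hr := PC.rank_injective.ne hne
  refine PC.distTo_lt hr ?_
  cases h <;> rename_i hpc <;> simp only [hpc, Function.update_self, finSucc?] at hr ⊢ <;>
    (try split_ifs) <;> simp [PC.rank] at hr ⊢ <;> omega

section Fairness

variable {e : Exec Net Val}

theorem Exec.pc_eq_of_forall_sched_ne {p : Net.Proc} {t w : ℕ} (htw : t ≤ w)
    (h : ∀ s, t ≤ s → s < w → e.sched s ≠ p) : (e.cfg w).pc p = (e.cfg t).pc p := by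
  induction w, htw using Nat.le_induction with
  | base => rfl
  | succ w htw ih =>
    rw [(e.step w).pc_of_ne (h w htw w.lt_succ_self).symm, ih fun s hts hsw => h s hts (by omega)]

theorem Exec.Fair.exists_sched_pc_eq (hfair : e.Fair) (p : Net.Proc) (t : ℕ) :
    ∃ w, t ≤ w ∧ e.sched w = p ∧ (e.cfg w).pc p = (e.cfg t).pc p := by
  have hex : ∃ w, t ≤ w ∧ e.sched w = p := hfair p t fun u _ => (e.cfg u).enabled p
  obtain ⟨htw, hw⟩ := Nat.find_spec hex
  exact ⟨_, htw, hw, e.pc_eq_of_forall_sched_ne htw fun s hts hsw hs =>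
    Nat.find_min hex hsw ⟨hts, hs⟩⟩

theorem Exec.Fair.exists_sched_pc_eq_lp (hfair : e.Fair) (p : Net.Proc) {j : Fin (Net.deg p)}
    {k : Fin 6} (hk2 : k ≠ 2) (hk3 : k ≠ 3) (t : ℕ) :
    ∃ w, t ≤ w ∧ e.sched w = p ∧ (e.cfg w).pc p = .lp j k := by
  induction hd : ((e.cfg t).pc p).distTo (.lp j k) using Nat.strong_induction_on generalizing t
    with | _ d ih
  obtain ⟨w, htw, hw, hpc⟩ := hfair.exists_sched_pc_eq p t
  by_cases hg : (e.cfg w).pc p = .lp j k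
  · exact ⟨w, htw, hw, hg⟩
  have hstep := e.step w
  rw [hw] at hstep
  obtain ⟨u, hwu, hu, hpcu⟩ := ih _ (hd ▸ hpc ▸ hstep.distTo_lt hk2 hk3 hg) (w + 1) rfl
  exact ⟨u, by omega, hu, hpcu⟩

end Fairness

section Copy

variable {c c' : Config Net Val} {p : Net.Proc} {a : Act Net.Proc Val}

def Copying (c : Config Net Val) (B : Net.Proc) (j : Fin (Net.deg B)) : Prop :=
  c.pc B = .lp j 1 ∨ c.pc B = .lp j 2 ∨ c.pc B = .lp j 3

/-- `B` leaves the copying window only once `CheckControl_{BA} = b_j`, either after the test at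
`lp j 1` or after writing `b_j` at `lp j 3`; so if `b_j` holds the value `v` of `Control_{AB}`,
`CheckControl_{BA}` holds `v` outside the window. -/
def CopyInv (c : Config Net Val) (B : Net.Proc) (j : Fin (Net.deg B)) (v : Bool) : Prop :=
  (Copying c B j → c.bv B j = v) ∧ (¬ Copying c B j → c.regCC B (Net.nbr B j) = v)

theorem Step.copyInv (h : Step Net Val c p a c') {B : Net.Proc} {j : Fin (Net.deg B)} {v : Bool}
    (hv : c.regC (Net.nbr B j) B = v) (hinv : CopyInv c B j v) : CopyInv c' B j v := by
  by_cases hp : B = p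
  · subst hp
    cases h with
    | readOwnCC i hpc =>
      by_cases hij : i = j <;> split_ifs <;> simp_all [CopyInv, Copying]
    | writeOwnCC i hpc =>
      by_cases hij : i = j <;> simp_all [CopyInv, Copying, upd2, (Net.nbr_inj _).eq_iff, eq_comm]
    | _ => (try simp only [finSucc?]); (try split_ifs) <;> simp_all [CopyInv, Copying]
  · simpa only [CopyInv, Copying, h.pc_of_ne hp, h.bv_of_ne hp, h.regCC_of_ne hp] using hinv

theorem Step.regCC_eq_of_copyInv (h : Step Net Val c p a c') {B : Net.Proc}
    {j : Fin (Net.deg B)} {v : Bool} (hinv : CopyInv c B j v)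
    (hcc : c.regCC B (Net.nbr B j) = v) : c'.regCC B (Net.nbr B j) = v := by
  by_cases hp : B = p
  · subst hp
    cases h with
    | writeOwnCC i hpc =>
      by_cases hij : i = j <;> simp_all [CopyInv, Copying, upd2, (Net.nbr_inj _).eq_iff, eq_comm]
    | _ => exact hcc
  · rwa [h.regCC_of_ne hp]

theorem Step.copyInv_of_pc_eq_lp_zero (h : Step Net Val c p a c') {j : Fin (Net.deg p)} {v : Bool}
    (hpc : c.pc p = .lp j 0) (hv : c.regC (Net.nbr p j) p = v) : CopyInv c' p j v := by
  cases h <;> simp_all [CopyInv, Copying]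

theorem Exec.Fair.eventually_regCC_eq {e : Exec Net Val} (hfair : e.Fair) {A B : Net.Proc}
    {j : Fin (Net.deg B)} (hj : Net.nbr B j = A) {v : Bool}
    (hv : ∀ᶠ u in atTop, (e.cfg u).regC A B = v) :
    ∀ᶠ u in atTop, (e.cfg u).regCC B A = v := by
  subst hj
  obtain ⟨t, hv⟩ := eventually_atTop.1 hv
  obtain ⟨w, htw, hw, hpcw⟩ := hfair.exists_sched_pc_eq_lp B (j := j) (k := 0) (by decide)
    (by decide) t
  have hstep := e.step w
  rw [hw] at hstep
  have hinv : ∀ u, w + 1 ≤ u → CopyInv (e.cfg u) B j v := by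
    intro u hu
    induction u, hu using Nat.le_induction with
    | base => exact hstep.copyInv_of_pc_eq_lp_zero hpcw (hv w htw)
    | succ u hu ih => exact (e.step u).copyInv (hv u (by omega)) ih
  -- at the next visit to `lp j 0`, `B` is outside the copying window
  obtain ⟨T, hwT, -, hpcT⟩ := hfair.exists_sched_pc_eq_lp B (j := j) (k := 0) (by decide)
    (by decide) (w + 1)
  refine eventually_atTop.2 ⟨T, fun u hu => ?_⟩
  induction u, hu using Nat.le_induction with
  | base => exact (hinv T hwT).2 (by simp [Copying, hpcT])
  | succ u hu ih => exact (e.step u).regCC_eq_of_copyInv (hinv u (by omega)) ih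

end Copy

section Pass

variable {c c' : Config Net Val} {p : Net.Proc} {a : Act Net.Proc Val}

def PassInv (c : Config Net Val) (A : Net.Proc) (v : Fin (Net.deg A) → Bool) : Prop :=
  ∀ i k, c.pc A = .lp i k → (∀ j < i, c.cv A j = v j ∧ c.lv A j = v j) ∧ (k = 5 → c.cv A i = v i)

theorem PassInv.of_pc_eq_five {c : Config Net Val} {A : Net.Proc} {v : Fin (Net.deg A) → Bool}
    (hinv : PassInv c A v) {i : Fin (Net.deg A)} (hpc : c.pc A = .lp i 5) {j : Fin (Net.deg A)}
    (hj : j ≤ i) : c.cv A j = v j ∧ Function.update (c.lv A) i (v i) j = v j := by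
  obtain ⟨hlt, h5⟩ := hinv i 5 hpc
  rcases hj.lt_or_eq with hj | rfl
  · simpa [Function.update_of_ne hj.ne] using hlt j hj
  · simp [h5 rfl]

theorem Step.passInv (h : Step Net Val c p a c') {A : Net.Proc} {v : Fin (Net.deg A) → Bool}
    (hC : ∀ j, c.regC A (Net.nbr A j) = v j) (hCC : ∀ j, c.regCC (Net.nbr A j) A = v j)
    (hinv : PassInv c A v) : PassInv c' A v := by
  by_cases hp : A = p
  · subst hp
    cases h with
    | writeOwnC i hpc =>
      intro i' k' hpc'
      simp only [finSucc?, Function.update_self] at hpc'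
      split_ifs at hpc'
      simp only [PC.lp.injEq] at hpc'
      obtain ⟨rfl, rfl⟩ := hpc'
      simp [Fin.lt_def]
    | readOwnCC i hpc =>
      intro i' k' hpc'
      simp only [Function.update_self] at hpc'
      split_ifs at hpc' <;> simp only [PC.lp.injEq] at hpc' <;> obtain ⟨rfl, rfl⟩ := hpc' <;>
        exact ⟨(hinv _ _ hpc).1, fun h => absurd h (by decide)⟩
    | readOwnC' i hpc =>
      intro i' k' hpc'
      simp only [Function.update_self, PC.lp.injEq] at hpc'
      obtain ⟨rfl, rfl⟩ := hpc'
      refine ⟨fun j hj => ?_, fun _ => by simp [hC]⟩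
      simpa [Function.update_of_ne hj.ne] using (hinv _ _ hpc).1 j hj
    | readNbrCC i hpc =>
      intro i' k' hpc'
      by_cases hs : i.1 + 1 < Net.deg A
      · simp only [finSucc?, hs, dite_true, Function.update_self, PC.lp.injEq] at hpc'
        obtain ⟨rfl, rfl⟩ := hpc'
        simp only [hCC, Function.update_self]
        refine ⟨fun j hj => hinv.of_pc_eq_five hpc ?_, fun h => absurd h (by decide)⟩
        exact Fin.le_def.2 (Nat.lt_succ_iff.1 (Fin.lt_def.1 hj))
      · simp only [finSucc?, hs, dite_false, Function.update_self] at hpc'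
        split_ifs at hpc'
        simp only [PC.lp.injEq] at hpc'
        obtain ⟨rfl, rfl⟩ := hpc'
        simp [Fin.lt_def]
    | writeW | readOwnC => intro i' k' hpc'; simp at hpc'
    | readNbrC i hpc | readNbrW i hpc | writeOwnCC i hpc =>
      intro i' k' hpc'
      simp only [Function.update_self, PC.lp.injEq] at hpc'
      obtain ⟨rfl, rfl⟩ := hpc'
      exact ⟨(hinv _ _ hpc).1, fun h => absurd h (by decide)⟩
  · simpa only [PassInv, h.pc_of_ne hp, h.cv_of_ne hp, h.lv_of_ne hp] using hinv

theorem Step.not_inLoop_of_passInv (h : Step Net Val c p a c') {i : Fin (Net.deg p)}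
    (hi : i.1 + 1 = Net.deg p) (hpc : c.pc p = .lp i 5) {v : Fin (Net.deg p) → Bool}
    (hCC : ∀ j, c.regCC (Net.nbr p j) p = v j) (hinv : PassInv c p v) : ¬ InLoop c' p := by
  have hexit : ∀ j, c.cv p j = Function.update (c.lv p) i (c.regCC (Net.nbr p i) p) j := by
    intro j
    have := hinv.of_pc_eq_five hpc (j := j) (Fin.le_def.2 (by omega))
    rw [hCC, this.1, this.2]
  cases h with
  | readNbrCC i' hpc' =>
    obtain rfl : i = i' := by simpa [hpc] using hpc'
    simp [InLoop, finSucc?, hi, hexit]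
  | _ => simp_all

end Pass

theorem Exec.eventually_regC_eq (e : Exec Net Val) {A : Net.Proc}
    (hloop : ∀ᶠ u in atTop, InLoop (e.cfg u) A) : ∃ R, ∀ᶠ u in atTop, (e.cfg u).regC A = R := by
  obtain ⟨t, hloop⟩ := eventually_atTop.1 hloop
  refine ⟨(e.cfg t).regC A, eventually_atTop.2 ⟨t, fun u hu => ?_⟩⟩
  induction u, hu using Nat.le_induction with
  | base => rfl
  | succ u hu ih => rw [(e.step u).regC_of_inLoop (hloop u hu), ih]

theorem Exec.Fair.frequently_not_inLoop {e : Exec Net Val} (hfair : e.Fair) {A : Net.Proc}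
    {v : Fin (Net.deg A) → Bool} (hC : ∀ᶠ u in atTop, ∀ j, (e.cfg u).regC A (Net.nbr A j) = v j)
    (hCC : ∀ᶠ u in atTop, ∀ j, (e.cfg u).regCC (Net.nbr A j) A = v j) :
    ∃ᶠ u in atTop, ¬ InLoop (e.cfg u) A := by
  refine frequently_atTop.2 fun t => ?_
  obtain ⟨T, hT⟩ := eventually_atTop.1 (hC.and hCC)
  have hpos := Net.deg_pos A
  obtain ⟨w, hTw, -, hpcw⟩ := hfair.exists_sched_pc_eq_lp A (j := ⟨0, hpos⟩) (k := 0) (by decide)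
    (by decide) (max t T)
  have hinv : ∀ u, w ≤ u → PassInv (e.cfg u) A v := by
    intro u hu
    induction u, hu using Nat.le_induction with
    | base =>
      intro i k hpc
      obtain ⟨rfl, rfl⟩ : ⟨0, hpos⟩ = i ∧ 0 = k := by simpa [hpcw] using hpc
      simp [Fin.lt_def]
    | succ u hu ih => exact (e.step u).passInv (hT u (by omega)).1 (hT u (by omega)).2 ih
  obtain ⟨u, hwu, hu, hpcu⟩ := hfair.exists_sched_pc_eq_lp A (j := ⟨Net.deg A - 1, by omega⟩)
    (k := 5) (by decide) (by decide) w
  have hstep := e.step u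
  rw [hu] at hstep
  exact ⟨u + 1, by omega,
    hstep.not_inLoop_of_passInv (by simp; omega) hpcu (hT u (by omega)).2 (hinv u hwu)⟩

end QR

open QR in
/-- Let `A` be a process executing the quasi rendezvous protocol.
Whatever the (fair) execution, from any instant the system reaches a configuration
in which the program counter of `A` is no longer within the repeat loop; in
particular no process stays in the repeat loop forever. -/
theorem quasi_rendezvous_exits_loop (Net : Network) (Val : Type)
    (e : Exec Net Val) (hfair : e.Fair) (A : Net.Proc) (t : ℕ) :
    ∃ u, t ≤ u ∧ ¬ InLoop (e.cfg u) A := by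
  refine Filter.frequently_atTop.1 (Filter.not_eventually.1 fun hloop => ?_) t
  obtain ⟨R, hR⟩ := e.eventually_regC_eq hloop
  have hC : ∀ᶠ u in Filter.atTop, ∀ i, (e.cfg u).regC A (Net.nbr A i) = R (Net.nbr A i) :=
    hR.mono fun u hu i => by rw [hu]
  have hCC : ∀ᶠ u in Filter.atTop, ∀ i, (e.cfg u).regCC (Net.nbr A i) A = R (Net.nbr A i) :=
    Filter.eventually_all.2 fun i =>
      have ⟨_, hj⟩ := Net.nbr_symm A i
      hfair.eventually_regCC_eq hj (hR.mono fun u hu => by rw [hu])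
  obtain ⟨u, hout, hin⟩ := ((hfair.frequently_not_inLoop hC hCC).and_eventually hloop).exists
  exact hout hin
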